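/- Let Γ = (V,E) be a reflexive locally-finite k-separable graph which is k-faithful (i.e., every k-atom A satisfies |A| ≤ |V \ Γ(A)|). Then any two distinct k-atoms of Γ intersect in fewer than k elements. -/

import Mathlib

open Set

/-- Image of a set under a relation (graph). -/
def RelImage {V : Type*} (Γ : V → V → Prop) (X : Set V) : Set V := {y | ∃ x ∈ X, Γ x y}

/-- Reverse relation. -/
def RelRev {V : Type*} (Γ : V → V → Prop) : V → V → Prop := fun x y => Γ y x

/-- Boundary ∂(X) = Γ(X) \ X. -/
def RelBoundary {V : Type*} (Γ : V → V → Prop) (X : Set V) : Set V := RelImage Γ X \ X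

/-- Exterior ∇(X) = V \ Γ(X). -/
def RelNabla {V : Type*} (Γ : V → V → Prop) (X : Set V) : Set V := (RelImage Γ X)ᶜ

def RelReflexive {V : Type*} (Γ : V → V → Prop) : Prop := ∀ x, Γ x x

def RelLocallyFinite {V : Type*} (Γ : V → V → Prop) : Prop :=
  ∀ x : V, (RelImage Γ {x}).Finite ∧ (RelImage (RelRev Γ) {x}).Finite

/-- The family S_k(Γ): finite X with |X| ≥ k and at least k vertices outside Γ(X). -/
def SkFam {V : Type*} (Γ : V → V → Prop) (k : ℕ) : Set (Set V) :=
  {X | X.Finite ∧ k ≤ X.ncard ∧ ∃ Y : Set V, Y.Finite ∧ Y.ncard = k ∧ Y ⊆ RelNabla Γ X}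

def RelSeparable {V : Type*} (Γ : V → V → Prop) (k : ℕ) : Prop := (SkFam Γ k).Nonempty

/-- The k-isoperimetric connectivity κ_k(Γ). -/
noncomputable def relKappa {V : Type*} (Γ : V → V → Prop) (k : ℕ) : ℕ :=
  sInf ((fun X => (RelBoundary Γ X).ncard) '' SkFam Γ k)

def IsKFragment {V : Type*} (Γ : V → V → Prop) (k : ℕ) (X : Set V) : Prop :=
  X ∈ SkFam Γ k ∧ (RelBoundary Γ X).ncard = relKappa Γ k

def IsKAtom {V : Type*} (Γ : V → V → Prop) (k : ℕ) (X : Set V) : Prop :=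
  IsKFragment Γ k X ∧ ∀ Y, IsKFragment Γ k Y → X.ncard ≤ Y.ncard

/-- Γ is k-faithful: every k-atom A satisfies |A| ≤ |V \ Γ(A)|. -/
def KFaithful {V : Type*} (Γ : V → V → Prop) (k : ℕ) : Prop :=
  ∀ A, IsKAtom Γ k A → (RelNabla Γ A).Infinite ∨ A.ncard ≤ (RelNabla Γ A).ncard

/-!
Suppose the atoms `X ≠ Y` meet in at least `k` vertices. Then `X ∩ Y ∈ S_k` is a proper
subset of the atom `X`, so `|∂(X ∩ Y)| > κ_k`, and submodularity of `|∂|` forces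
`|∂(X ∪ Y)| < κ_k`. Hence `X ∪ Y ∉ S_k`, i.e. fewer than `k` vertices lie outside `Γ(X ∪ Y)`;
in particular `V` is finite. Counting `V` once around `X` (using faithfulness) and once around
`X ∪ Y` then gives `|X ∩ Y| ≤ k - 2`.
-/

theorem Set.exists_finite_subset_ncard_eq {V : Type*} {S : Set V} {k : ℕ}
    (h : S.Infinite ∨ k ≤ S.ncard) : ∃ Y : Set V, Y.Finite ∧ Y.ncard = k ∧ Y ⊆ S := by
  rcases S.finite_or_infinite with hS | hS
  · obtain ⟨Y, hYS, hYk⟩ := Set.exists_subset_card_eq (h.resolve_left hS.not_infinite)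
    exact ⟨Y, hS.subset hYS, hYk, hYS⟩
  · obtain ⟨Y, hYS, hYf, hYk⟩ := hS.exists_subset_ncard_eq k
    exact ⟨Y, hYf, hYk, hYS⟩

section RelImage

variable {V : Type*} {Γ : V → V → Prop}

theorem relImage_mono {X Y : Set V} (h : X ⊆ Y) : RelImage Γ X ⊆ RelImage Γ Y :=
  fun _ ⟨x, hx, hxy⟩ => ⟨x, h hx, hxy⟩

theorem relImage_union (X Y : Set V) :
    RelImage Γ (X ∪ Y) = RelImage Γ X ∪ RelImage Γ Y := by
  ext v
  simp only [RelImage, mem_union, mem_ofPred_eq, or_and_right, exists_or]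

theorem subset_relImage (hrefl : RelReflexive Γ) (X : Set V) : X ⊆ RelImage Γ X :=
  fun x hx => ⟨x, hx, hrefl x⟩

theorem relNabla_anti {X Y : Set V} (h : X ⊆ Y) : RelNabla Γ Y ⊆ RelNabla Γ X :=
  compl_subset_compl.mpr (relImage_mono h)

theorem RelLocallyFinite.relImage_finite (hlf : RelLocallyFinite Γ) {X : Set V}
    (hX : X.Finite) : (RelImage Γ X).Finite := by
  have : RelImage Γ X = ⋃ x ∈ X, RelImage Γ {x} := by ext v; simp [RelImage]
  rw [this]
  exact hX.biUnion fun x _ => (hlf x).1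

variable (hrefl : RelReflexive Γ) (hlf : RelLocallyFinite Γ)
include hrefl hlf

theorem ncard_relBoundary_add_ncard {X : Set V} (hX : X.Finite) :
    (RelBoundary Γ X).ncard + X.ncard = (RelImage Γ X).ncard :=
  ncard_sdiff_add_ncard_of_subset (subset_relImage hrefl X) (hlf.relImage_finite hX)

theorem ncard_relBoundary_add_ncard_add_ncard_relNabla [Finite V] {X : Set V} (hX : X.Finite) :
    (RelBoundary Γ X).ncard + X.ncard + (RelNabla Γ X).ncard = Nat.card V := by
  rw [ncard_relBoundary_add_ncard hrefl hlf hX]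
  exact ncard_add_ncard_compl _

theorem ncard_relBoundary_inter_add_union_le {A B : Set V} (hA : A.Finite) (hB : B.Finite) :
    (RelBoundary Γ (A ∩ B)).ncard + (RelBoundary Γ (A ∪ B)).ncard ≤
      (RelBoundary Γ A).ncard + (RelBoundary Γ B).ncard := by
  have hGA := hlf.relImage_finite hA
  have hGB := hlf.relImage_finite hB
  have hinter : (RelImage Γ (A ∩ B)).ncard ≤ (RelImage Γ A ∩ RelImage Γ B).ncard :=
    ncard_le_ncard (subset_inter (relImage_mono inter_subset_left)
      (relImage_mono inter_subset_right)) (hGA.inter_of_left _)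
  have himage := ncard_inter_add_ncard_union _ _ hGA hGB
  rw [← relImage_union] at himage
  have := ncard_relBoundary_add_ncard hrefl hlf (hA.inter_of_left B)
  have := ncard_relBoundary_add_ncard hrefl hlf (hA.union hB)
  have := ncard_relBoundary_add_ncard hrefl hlf hA
  have := ncard_relBoundary_add_ncard hrefl hlf hB
  have := ncard_inter_add_ncard_union A B hA hB
  omega

end RelImage

section Atoms

variable {V : Type*} {Γ : V → V → Prop} {k : ℕ}

theorem relKappa_le_ncard_relBoundary {X : Set V} (hX : X ∈ SkFam Γ k) :
    relKappa Γ k ≤ (RelBoundary Γ X).ncard :=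
  Nat.sInf_le ⟨X, hX, rfl⟩

theorem finite_relNabla_and_ncard_lt {Z : Set V} (hZ : Z.Finite) (hkZ : k ≤ Z.ncard)
    (hZκ : (RelBoundary Γ Z).ncard < relKappa Γ k) :
    (RelNabla Γ Z).Finite ∧ (RelNabla Γ Z).ncard < k := by
  by_contra! h
  have hN : (RelNabla Γ Z).Infinite ∨ k ≤ (RelNabla Γ Z).ncard := by
    by_cases hf : (RelNabla Γ Z).Finite
    exacts [Or.inr (h hf), Or.inl hf]
  have hZ : Z ∈ SkFam Γ k := ⟨hZ, hkZ, Set.exists_finite_subset_ncard_eq hN⟩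
  exact (relKappa_le_ncard_relBoundary hZ).not_gt hZκ

theorem IsKAtom.ncard_eq {X Y : Set V} (hX : IsKAtom Γ k X) (hY : IsKAtom Γ k Y) :
    X.ncard = Y.ncard :=
  le_antisymm (hX.2 Y hY.1) (hY.2 X hX.1)

theorem IsKAtom.inter_mem_skFam {X : Set V} (hX : IsKAtom Γ k X) (Y : Set V)
    (hk : k ≤ (X ∩ Y).ncard) : X ∩ Y ∈ SkFam Γ k := by
  obtain ⟨hXf, -, W, hWf, hWk, hWX⟩ := hX.1.1
  exact ⟨hXf.inter_of_left Y, hk, W, hWf, hWk, hWX.trans (relNabla_anti inter_subset_left)⟩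

theorem IsKAtom.relKappa_lt_ncard_relBoundary {X Z : Set V} (hX : IsKAtom Γ k X)
    (hZX : Z ⊂ X) (hZ : Z ∈ SkFam Γ k) : relKappa Γ k < (RelBoundary Γ Z).ncard := by
  refine (relKappa_le_ncard_relBoundary hZ).lt_of_ne fun hκ => ?_
  exact (ncard_lt_ncard hZX hX.1.1.1).not_ge (hX.2 Z ⟨hZ, hκ.symm⟩)

theorem IsKAtom.inter_ssubset {X Y : Set V} (hX : IsKAtom Γ k X) (hY : IsKAtom Γ k Y)
    (hne : X ≠ Y) : X ∩ Y ⊂ X := by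
  refine inter_subset_left.ssubset_of_ne fun heq => hne ?_
  exact eq_of_subset_of_ncard_le (inter_eq_left.mp heq) (hY.ncard_eq hX).le hY.1.1.1

theorem KFaithful.ncard_le_ncard_relNabla [Finite V] (hfaith : KFaithful Γ k) {A : Set V}
    (hA : IsKAtom Γ k A) : A.ncard ≤ (RelNabla Γ A).ncard :=
  (hfaith A hA).resolve_left (not_infinite.mpr (toFinite _))

end Atoms

theorem stmt5_general {V : Type*} (Γ : V → V → Prop) (k : ℕ)
    (hrefl : RelReflexive Γ) (hlf : RelLocallyFinite Γ)
    (hfaith : KFaithful Γ k)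
    (X Y : Set V) (hX : IsKAtom Γ k X) (hY : IsKAtom Γ k Y) (hne : X ≠ Y) :
    (X ∩ Y).ncard < k := by
  by_contra! hk
  have hXf : X.Finite := hX.1.1.1
  have hYf : Y.Finite := hY.1.1.1
  have hinter : relKappa Γ k < (RelBoundary Γ (X ∩ Y)).ncard :=
    hX.relKappa_lt_ncard_relBoundary (hX.inter_ssubset hY hne) (hX.inter_mem_skFam Y hk)
  have hsub := ncard_relBoundary_inter_add_union_le hrefl hlf hXf hYf
  rw [hX.1.2, hY.1.2] at hsub
  have hkU : k ≤ (X ∪ Y).ncard :=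
    hk.trans (ncard_le_ncard (inter_subset_left.trans subset_union_left) (hXf.union hYf))
  obtain ⟨hNf, hNk⟩ := finite_relNabla_and_ncard_lt (Γ := Γ) (hXf.union hYf) hkU (by omega)
  have : Finite V := finite_univ_iff.mp <| by
    rw [← union_compl_self (RelImage Γ (X ∪ Y))]
    exact (hlf.relImage_finite (hXf.union hYf)).union hNf
  have hcountX := ncard_relBoundary_add_ncard_add_ncard_relNabla hrefl hlf hXf
  have hcountU := ncard_relBoundary_add_ncard_add_ncard_relNabla hrefl hlf (hXf.union hYf)
  have := hfaith.ncard_le_ncard_relNabla hX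
  have := hX.ncard_eq hY
  have := ncard_inter_add_ncard_union X Y hXf hYf
  rw [hX.1.2] at hcountX
  omega

theorem stmt5 {V : Type*} (Γ : V → V → Prop) (k : ℕ)
    (hrefl : RelReflexive Γ) (hlf : RelLocallyFinite Γ) (hsep : RelSeparable Γ k)
    (hfaith : KFaithful Γ k)
    (X Y : Set V) (hX : IsKAtom Γ k X) (hY : IsKAtom Γ k Y) (hne : X ≠ Y) :
    (X ∩ Y).ncard < k :=
  stmt5_general Γ k hrefl hlf hfaith X Y hX hY hne
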